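/- Let G be a finite simple graph on n+2 vertices and let u, v be distinct vertices of G. Set m = ⌊(n+2)/3⌋. Then the number of inclusion-wise minimal u–v separators in G satisfies mc_{u,v}(G) ≤ 2·∑_{k=0}^{m} C(n+2, k) ≤ 2(m+1)·C(n+2, m). -/

import Mathlib

/-- `Separates G u v T` means every walk from `u` to `v` in `G` meets `T`;
for `u, v ∉ T` this says `u` and `v` lie in different connected components of `G \ T`. -/
def Separates {V : Type*} (G : SimpleGraph V) (u v : V) (T : Set V) : Prop :=
  ∀ p : G.Walk u v, ∃ x ∈ p.support, x ∈ T

/-- `T` is an inclusion-wise minimal `u`–`v` separator in `G`: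
`T ⊆ V(G) \ {u, v}`, removing `T` puts `u` and `v` in different connected components,
and removing any proper subset `T' ⊊ T` leaves `u` and `v` in the same component. -/
def IsMinSeparator {V : Type*} (G : SimpleGraph V) (u v : V) (T : Set V) : Prop :=
  u ∉ T ∧ v ∉ T ∧ Separates G u v T ∧ ∀ T' ⊂ T, ¬ Separates G u v T'

/-- `mc G u v` is the number of inclusion-wise minimal `u`–`v` separators in `G`. -/
noncomputable def mc {V : Type*} (G : SimpleGraph V) (u v : V) : ℕ :=
  {T : Set V | IsMinSeparator G u v T}.ncard

/-- `g n` is the maximum of `mc G u v` over graphs `G` on `n + 2` vertices and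
pairs of distinct vertices `u ≠ v`. -/
noncomputable def g (n : ℕ) : ℕ :=
  sSup {k | ∃ (G : SimpleGraph (Fin (n + 2))) (u v : Fin (n + 2)), u ≠ v ∧ mc G u v = k}

/-- `T` is a vertex cut of `G`: removing `T` disconnects `G`, i.e. some two remaining
vertices lie in different connected components of `G \ T`. -/
def IsCutSet {V : Type*} (G : SimpleGraph V) (T : Set V) : Prop :=
  ∃ u v, u ∉ T ∧ v ∉ T ∧ Separates G u v T

/-- `T` is an inclusion-wise minimal vertex cut of `G`. -/
def IsMinCutSet {V : Type*} (G : SimpleGraph V) (T : Set V) : Prop :=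
  IsCutSet G T ∧ ∀ T' ⊂ T, ¬ IsCutSet G T'

/-- `c n` is the maximum number of inclusion-wise minimal vertex cuts of a graph
on `n` vertices. -/
noncomputable def c (n : ℕ) : ℕ :=
  sSup {k | ∃ G : SimpleGraph (Fin n), {T : Set (Fin n) | IsMinCutSet G T}.ncard = k}

/-- The binary entropy function `H(x) = -x log₂ x - (1 - x) log₂ (1 - x)`. -/
noncomputable def binH (x : ℝ) : ℝ :=
  -x * Real.logb 2 x - (1 - x) * Real.logb 2 (1 - x)

/-- The outer neighbourhood of `X` in `G`: all vertices outside `X` having a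
neighbour in `X`. -/
def outNbhd {V : Type*} (G : SimpleGraph V) (X : Set V) : Set V :=
  {y | y ∉ X ∧ ∃ x ∈ X, G.Adj x y}

/-- The vertex set of the connected component of `u` in `G \ T`: all vertices
reachable from `u` by a walk avoiding `T`. -/
def compOf {V : Type*} (G : SimpleGraph V) (T : Set V) (u : V) : Set V :=
  {x | ∃ p : G.Walk u x, ∀ y ∈ p.support, y ∉ T}

section Aux
variable {V : Type*} {G : SimpleGraph V} {u v : V} {T : Set V}

lemma separates_symm (h : Separates G u v T) : Separates G v u T := fun p => by
  obtain ⟨x, hx, hxT⟩ := h p.reverse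
  exact ⟨x, by simpa [SimpleGraph.Walk.support_reverse] using hx, hxT⟩

lemma mem_compOf_self (hu : u ∉ T) : u ∈ compOf G T u :=
  ⟨SimpleGraph.Walk.nil, by simp [hu]⟩

lemma compOf_disjoint_T : Disjoint (compOf G T u) T := by
  rw [Set.disjoint_left]
  rintro x ⟨p, hp⟩ hxT
  exact hp x p.end_mem_support hxT

lemma compOf_disjoint (hsep : Separates G u v T) :
    Disjoint (compOf G T u) (compOf G T v) := by
  rw [Set.disjoint_left]
  rintro x ⟨p, hp⟩ ⟨q, hq⟩
  obtain ⟨y, hy, hyT⟩ := hsep (p.append q.reverse)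
  rw [SimpleGraph.Walk.mem_support_append_iff] at hy
  rcases hy with h | h
  · exact hp y h hyT
  · exact hq y (by simpa [SimpleGraph.Walk.support_reverse] using h) hyT

lemma outNbhd_compOf_eq [DecidableEq V] (hu : u ∉ T) (hsep : Separates G u v T)
    (hmin : ∀ T' ⊂ T, ¬ Separates G u v T') : outNbhd G (compOf G T u) = T := by
  ext t
  constructor
  · rintro ⟨htC, x, ⟨p, hp⟩, hadj⟩
    by_contra htT
    refine htC ⟨p.concat hadj, ?_⟩
    intro y hy
    rw [SimpleGraph.Walk.support_concat] at hy
    simp only [List.concat_eq_append, List.mem_append, List.mem_singleton] at hy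
    rcases hy with h | h
    · exact hp y h
    · subst h; exact htT
  · intro htT
    have htC : t ∉ compOf G T u := Set.disjoint_left.mp compOf_disjoint_T.symm htT
    refine ⟨htC, ?_⟩
    have hss : T \ {t} ⊂ T := Set.sdiff_singleton_ssubset.mpr htT
    have hns := hmin _ hss
    rw [Separates] at hns
    push_neg at hns
    obtain ⟨p, hp⟩ := hns
    have htp : t ∈ p.support := by
      obtain ⟨x, hx, hxT⟩ := hsep p
      have hxt : x = t := by
        by_contra hne
        exact hp x hx ⟨hxT, hne⟩
      exact hxt ▸ hx
    set q := p.takeUntil t htp with hq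
    have hqsup : ∀ y ∈ q.support, y ∈ p.support :=
      fun y hy => p.support_takeUntil_subset htp hy
    have hcnt : q.support.count t = 1 := p.count_support_takeUntil_eq_one htp
    have hne : t ≠ u := fun h => hu (h ▸ htT)
    obtain ⟨x, hadj, r, hqr⟩ := SimpleGraph.Walk.exists_eq_cons_of_ne hne q.reverse
    have htr : t ∉ r.support := by
      have h1 : q.reverse.support.count t = 1 := by
        rw [SimpleGraph.Walk.support_reverse, List.count_reverse]; exact hcnt
      rw [hqr, SimpleGraph.Walk.support_cons, List.count_cons_self] at h1
      intro h
      have := List.count_pos_iff.mpr h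
      omega
    have hrsup : ∀ y ∈ r.support, y ∈ q.support := by
      intro y hy
      have : y ∈ q.reverse.support := by
        rw [hqr, SimpleGraph.Walk.support_cons]; exact List.mem_cons_of_mem _ hy
      rwa [SimpleGraph.Walk.support_reverse, List.mem_reverse] at this
    refine ⟨x, ⟨r.reverse, ?_⟩, hadj.symm⟩
    intro y hy
    rw [SimpleGraph.Walk.support_reverse, List.mem_reverse] at hy
    have hyt : y ≠ t := fun h => htr (h ▸ hy)
    exact fun hyT => hp y (hqsup y (hrsup y hy)) ⟨hyT, hyt⟩

end Aux

lemma card_filter_card_le (N m : ℕ) :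
    (Finset.univ.filter fun S : Finset (Fin N) => S.card ≤ m).card
      = ∑ k ∈ Finset.range (m + 1), N.choose k := by
  have h : (Finset.univ.filter fun S : Finset (Fin N) => S.card ≤ m)
      = (Finset.range (m + 1)).biUnion fun k => Finset.powersetCard k Finset.univ := by
    ext S
    simp [Finset.mem_powersetCard, Nat.lt_succ_iff]
  rw [h, Finset.card_biUnion]
  · simp [Finset.card_powersetCard]
  · intro i _ j _ hij
    rw [Function.onFun, Finset.disjoint_left]
    intro S h1 h2
    rw [Finset.mem_powersetCard] at h1 h2
    exact hij (h1.2.symm.trans h2.2)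

lemma choose_mono_below {N r s : ℕ} (hrs : r ≤ s) (hs : s ≤ N / 2) :
    N.choose r ≤ N.choose s := by
  induction hrs using Nat.decreasingInduction with
  | self => exact le_refl _
  | of_succ k hk ih =>
      exact (Nat.choose_le_succ_of_lt_half_left (lt_of_lt_of_le hk hs)).trans ih


/-- For a graph on `n + 2` vertices with distinct vertices `u, v` and
`m = ⌊(n+2)/3⌋`, we have `mc G u v ≤ 2 ∑_{k ≤ m} C(n+2, k) ≤ 2 (m+1) C(n+2, m)`. -/
theorem mc_le_binomial_bound (n : ℕ) (G : SimpleGraph (Fin (n + 2)))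
    (u v : Fin (n + 2)) (huv : u ≠ v) :
    mc G u v ≤ 2 * ∑ k ∈ Finset.range ((n + 2) / 3 + 1), (n + 2).choose k ∧
      2 * ∑ k ∈ Finset.range ((n + 2) / 3 + 1), (n + 2).choose k ≤
        2 * ((n + 2) / 3 + 1) * (n + 2).choose ((n + 2) / 3) := by
  classical
  constructor
  · rw [mc]
    set m := (n + 2) / 3 with hm
    set F : Set (Fin (n + 2)) → Bool × Finset (Fin (n + 2)) := fun T =>
      if (compOf G T u).ncard ≤ m then (false, (compOf G T u).toFinset)
      else if (compOf G T v).ncard ≤ m then (true, (compOf G T v).toFinset)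
      else (true, T.toFinset) with hF
    have key : {T : Set (Fin (n + 2)) | IsMinSeparator G u v T}.ncard
        ≤ {p : Bool × Finset (Fin (n + 2)) | p.2.card ≤ m}.ncard := by
      apply Set.ncard_le_ncard_of_injOn F ?_ ?_ (Set.toFinite _)
      · rintro T ⟨hu, hv, hsep, hmin⟩
        by_cases h1 : (compOf G T u).ncard ≤ m
        · simp only [hF, if_pos h1, Set.mem_setOf_eq]
          rwa [Set.ncard_eq_toFinset_card'] at h1
        · by_cases h2 : (compOf G T v).ncard ≤ m
          · simp only [hF, if_neg h1, if_pos h2, Set.mem_setOf_eq]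
            rwa [Set.ncard_eq_toFinset_card'] at h2
          · simp only [hF, if_neg h1, if_neg h2, Set.mem_setOf_eq]
            have hdis1 : Disjoint (compOf G T u) (compOf G T v) := compOf_disjoint hsep
            have hdis2 : Disjoint (compOf G T u ∪ compOf G T v) T :=
              Set.disjoint_union_left.mpr ⟨compOf_disjoint_T, compOf_disjoint_T⟩
            have hle : (compOf G T u).ncard + (compOf G T v).ncard + T.ncard ≤ n + 2 := by
              have h := Set.ncard_le_ncard
                (Set.subset_univ ((compOf G T u ∪ compOf G T v) ∪ T)) Set.finite_univ
              rwa [Set.ncard_univ, Nat.card_eq_fintype_card, Fintype.card_fin,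
                Set.ncard_union_eq hdis2 (Set.toFinite _) (Set.toFinite _),
                Set.ncard_union_eq hdis1 (Set.toFinite _) (Set.toFinite _)] at h
            rw [← Set.ncard_eq_toFinset_card']
            omega
      · rintro T1 hT1 T2 hT2 hEq
        obtain ⟨hu1, hv1, hsep1, hmin1⟩ := hT1
        obtain ⟨hu2, hv2, hsep2, hmin2⟩ := hT2
        have eq1 : outNbhd G (compOf G T1 u) = T1 := outNbhd_compOf_eq hu1 hsep1 hmin1
        have eq2 : outNbhd G (compOf G T2 u) = T2 := outNbhd_compOf_eq hu2 hsep2 hmin2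
        have eq1v : outNbhd G (compOf G T1 v) = T1 :=
          outNbhd_compOf_eq hv1 (separates_symm hsep1)
            (fun T' h hs => hmin1 T' h (separates_symm hs))
        have eq2v : outNbhd G (compOf G T2 v) = T2 :=
          outNbhd_compOf_eq hv2 (separates_symm hsep2)
            (fun T' h hs => hmin2 T' h (separates_symm hs))
        simp only [hF] at hEq
        split_ifs at hEq with ha hb hc hd he <;>
          simp only [Prod.mk.injEq, Set.toFinset_inj] at hEq <;>
          first
            | exact Bool.noConfusion hEq.1
            | exact hEq.2
            | (rw [← hEq.2] at hv2; exact (hv2 (mem_compOf_self hv1)).elim)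
            | (rw [hEq.2] at hv1; exact (hv1 (mem_compOf_self hv2)).elim)
            | rw [← eq1, ← eq2, hEq.2]
            | rw [← eq1v, ← eq2v, hEq.2]
    refine key.trans ?_
    rw [Set.ncard_eq_toFinset_card']
    have htf : {p : Bool × Finset (Fin (n + 2)) | p.2.card ≤ m}.toFinset
        = Finset.univ ×ˢ (Finset.univ.filter fun S : Finset (Fin (n + 2)) => S.card ≤ m) := by
      ext p
      simp
    rw [htf, Finset.card_product, card_filter_card_le]
    simp
  · rw [mul_assoc]
    apply Nat.mul_le_mul_left
    calc ∑ k ∈ Finset.range ((n + 2) / 3 + 1), (n + 2).choose k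
        ≤ ∑ _k ∈ Finset.range ((n + 2) / 3 + 1), (n + 2).choose ((n + 2) / 3) := by
          apply Finset.sum_le_sum
          intro k hk
          rw [Finset.mem_range, Nat.lt_succ_iff] at hk
          exact choose_mono_below hk (by omega)
      _ = ((n + 2) / 3 + 1) * (n + 2).choose ((n + 2) / 3) := by
          rw [Finset.sum_const, Finset.card_range, smul_eq_mul]
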